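/- arXiv:2510.24441 — 4 statements merged into one kernel-verified Lean document; each statement's English description precedes it below -/
import Mathlib

section
/- Let E be a C*-algebra, I a closed two-sided ideal of the multiplier algebra M(E), and set K equal to the closure of IE + EI in E. Then K is a closed two-sided ideal of E, and I is contained in the kernel of the induced *-homomorphism M(E) → M(E/K). -/
open scoped MultiplierAlgebra

private lemma aux_eq_zero_of_mul_right {E : Type*} [NonUnitalCStarAlgebra E] (x : E)
    (h : ∀ y : E, x * y = 0) : x = 0 :=
  (CStarRing.mul_star_self_eq_zero_iff x).mp (h (star x))

private lemma aux_eq_zero_of_mul_left {E : Type*} [NonUnitalCStarAlgebra E] (x : E)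
    (h : ∀ y : E, y * x = 0) : x = 0 :=
  (CStarRing.star_mul_self_eq_zero_iff x).mp (h (star x))

private lemma aux_snd_mul {E : Type*} [NonUnitalCStarAlgebra E] (m : 𝓜(ℂ, E)) (a b : E) :
    m.snd (a * b) = a * m.snd b := by
  have h : ∀ y : E, (m.snd (a * b) - a * m.snd b) * y = 0 := by
    intro y
    rw [sub_mul, m.central (a * b) y, mul_assoc, ← m.central b y, ← mul_assoc, sub_self]
  simpa [sub_eq_zero] using aux_eq_zero_of_mul_right _ h

private lemma aux_fst_mul {E : Type*} [NonUnitalCStarAlgebra E] (m : 𝓜(ℂ, E)) (a b : E) :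
    m.fst (a * b) = m.fst a * b := by
  have h : ∀ y : E, y * (m.fst (a * b) - m.fst a * b) = 0 := by
    intro y
    rw [mul_sub, ← m.central y (a * b), ← mul_assoc, m.central y a, mul_assoc, sub_self]
  simpa [sub_eq_zero] using aux_eq_zero_of_mul_left _ h

/-- The ideal `K = closure (IE + EI)` of `E` associated to an ideal `I` of `M(E)`:
the closure of the linear span of all products `m·e` and `e·m` with `m ∈ I`, `e ∈ E`
(the product of a multiplier with an element of `E` is implemented by `fst`/`snd`). -/
noncomputable def inducedIdeal {E : Type*} [NonUnitalCStarAlgebra E]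
    (I : Set 𝓜(ℂ, E)) : Set E :=
  closure ↑(Submodule.span ℂ
    ({x : E | ∃ m ∈ I, ∃ e : E, x = m.fst e} ∪ {x : E | ∃ m ∈ I, ∃ e : E, x = m.snd e}))

/-- Let `E` be a C*-algebra, `I` a closed two-sided ideal of `M(E)`, and
`K = closure (IE + EI)`.  Then `K` is a closed two-sided ideal of `E`, and `I` is contained in
the kernel of the induced ∗-homomorphism `M(E) → M(E/K)` (the strict extension of the
quotient map `q : E → E/K`). -/
theorem inducedIdeal_isIdeal_and_subset_ker
    {E EmodK : Type*} [NonUnitalCStarAlgebra E] [NonUnitalCStarAlgebra EmodK]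
    (I : Set 𝓜(ℂ, E)) (hIclosed : IsClosed I)
    (hIadd : ∀ x ∈ I, ∀ y ∈ I, x + y ∈ I)
    (hIleft : ∀ (m : 𝓜(ℂ, E)), ∀ x ∈ I, m * x ∈ I)
    (hIright : ∀ (m : 𝓜(ℂ, E)), ∀ x ∈ I, x * m ∈ I)
    (q : E →⋆ₙₐ[ℂ] EmodK) (hqsurj : Function.Surjective q)
    (hker : ∀ e : E, q e = 0 ↔ e ∈ inducedIdeal I)
    (π : 𝓜(ℂ, E) →⋆ₙₐ[ℂ] 𝓜(ℂ, EmodK))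
    (hπfst : ∀ (m : 𝓜(ℂ, E)) (e : E), (π m).fst (q e) = q (m.fst e))
    (hπsnd : ∀ (m : 𝓜(ℂ, E)) (e : E), (π m).snd (q e) = q (m.snd e)) :
    (IsClosed (inducedIdeal I) ∧
      (∀ x ∈ inducedIdeal I, ∀ y ∈ inducedIdeal I, x + y ∈ inducedIdeal I) ∧
      (∀ (e : E), ∀ x ∈ inducedIdeal I, e * x ∈ inducedIdeal I) ∧
      (∀ (e : E), ∀ x ∈ inducedIdeal I, x * e ∈ inducedIdeal I)) ∧
    (∀ m ∈ I, π m = 0) := by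
  set S : Set E :=
    {x : E | ∃ m ∈ I, ∃ e : E, x = m.fst e} ∪ {x : E | ∃ m ∈ I, ∃ e : E, x = m.snd e} with hS
  set V : Submodule ℂ E := Submodule.span ℂ S with hV
  have hKdef : inducedIdeal I = closure (V : Set E) := rfl
  have hgen_fst : ∀ m ∈ I, ∀ e : E, m.fst e ∈ inducedIdeal I := fun m hm e =>
    subset_closure (Submodule.subset_span (Or.inl ⟨m, hm, e, rfl⟩))
  have hgen_snd : ∀ m ∈ I, ∀ e : E, m.snd e ∈ inducedIdeal I := fun m hm e =>
    subset_closure (Submodule.subset_span (Or.inr ⟨m, hm, e, rfl⟩))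
  have hclosed : IsClosed (inducedIdeal I) := isClosed_closure
  have hadd : ∀ x ∈ inducedIdeal I, ∀ y ∈ inducedIdeal I, x + y ∈ inducedIdeal I := by
    intro x hx y hy
    rw [hKdef, ← Submodule.topologicalClosure_coe] at hx hy ⊢
    exact add_mem hx hy
  -- left multiplication maps the span into the span
  have hVleft : ∀ (e : E), ∀ x ∈ V, e * x ∈ V := by
    intro e x hx
    refine Submodule.span_induction ?_ ?_ ?_ ?_ hx
    · rintro z (⟨m, hm, e', rfl⟩ | ⟨m, hm, e', rfl⟩)
      · have : e * m.fst e' = (((e : 𝓜(ℂ, E)) * m).fst) e' := by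
          simp [DoubleCentralizer.mul_fst, DoubleCentralizer.coe_fst]
        rw [this]
        exact Submodule.subset_span (Or.inl ⟨_, hIleft _ m hm, e', rfl⟩)
      · rw [← aux_snd_mul m e e']
        exact Submodule.subset_span (Or.inr ⟨m, hm, e * e', rfl⟩)
    · simp
    · intro a b _ _ ha hb
      rw [mul_add]; exact add_mem ha hb
    · intro c a _ ha
      rw [mul_smul_comm]; exact Submodule.smul_mem _ _ ha
  have hVright : ∀ (e : E), ∀ x ∈ V, x * e ∈ V := by
    intro e x hx
    refine Submodule.span_induction ?_ ?_ ?_ ?_ hx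
    · rintro z (⟨m, hm, e', rfl⟩ | ⟨m, hm, e', rfl⟩)
      · rw [← aux_fst_mul m e' e]
        exact Submodule.subset_span (Or.inl ⟨m, hm, e' * e, rfl⟩)
      · have : m.snd e' * e = ((m * (e : 𝓜(ℂ, E))).snd) e' := by
          simp [DoubleCentralizer.mul_snd, DoubleCentralizer.coe_snd]
        rw [this]
        exact Submodule.subset_span (Or.inr ⟨_, hIright _ m hm, e', rfl⟩)
    · simp
    · intro a b _ _ ha hb
      rw [add_mul]; exact add_mem ha hb
    · intro c a _ ha
      rw [smul_mul_assoc]; exact Submodule.smul_mem _ _ ha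
  have hleft : ∀ (e : E), ∀ x ∈ inducedIdeal I, e * x ∈ inducedIdeal I := by
    intro e x hx
    rw [hKdef] at hx ⊢
    exact map_mem_closure (continuous_const.mul continuous_id) hx (hVleft e)
  have hright : ∀ (e : E), ∀ x ∈ inducedIdeal I, x * e ∈ inducedIdeal I := by
    intro e x hx
    rw [hKdef] at hx ⊢
    exact map_mem_closure (f := fun y => y * e) (continuous_id.mul continuous_const) hx fun y hy => hVright e y hy
  refine ⟨⟨hclosed, hadd, hleft, hright⟩, ?_⟩
  intro m hm
  have hfst : (π m).fst = 0 := by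
    ext z
    obtain ⟨e, rfl⟩ := hqsurj z
    rw [hπfst m e, (hker _).mpr (hgen_fst m hm e)]
    rfl
  have hsnd : (π m).snd = 0 := by
    ext z
    obtain ⟨e, rfl⟩ := hqsurj z
    rw [hπsnd m e, (hker _).mpr (hgen_snd m hm e)]
    rfl
  exact DoubleCentralizer.ext _ _ _ _ (Prod.ext hfst hsnd)
end

section
/- Let H be a Hilbert space and P : B(H) → B(H) a unital completely positive idempotent (P ∘ P = P). Then the range R = P(B(H)), equipped with the product x ⊙ y := P(xy), the inherited involution, and the inherited norm, is a C*-algebra. -/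
/-- Positivity in a matrix algebra over a ⋆-ring: `m ≥ 0` iff `m = zᴴ * z` for some `z`.
(For matrices over a C*-algebra this is the usual C*-positivity.) -/
def MatPos {A : Type*} [NonUnitalRing A] [StarRing A] {n : ℕ}
    (m : Matrix (Fin n) (Fin n) A) : Prop :=
  ∃ z : Matrix (Fin n) (Fin n) A, m = z.conjTranspose * z

/-- A linear map between ⋆-algebras is completely positive if it maps positive matrices to
positive matrices at every matrix level. -/
def IsCP {A B : Type*} [NonUnitalRing A] [StarRing A] [Module ℂ A]
    [NonUnitalRing B] [StarRing B] [Module ℂ B] (φ : A →ₗ[ℂ] B) : Prop :=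
  ∀ (n : ℕ) (m : Matrix (Fin n) (Fin n) A), MatPos m → MatPos (m.map φ)

/-!
Complete positivity is used only at the `2 × 2` level, on the matrices `zᴴ z` with
`z = !![u, v; 0, w]`. Positivity of their images under `P` shows that `P` commutes with `star`, that
`P` is contractive (`u = 1`, `v = a`, `w* w = ‖a‖² - a* a`), the Kadison–Schwarz inequality
`(P x)* (P x) ≤ P (x* x)` (`u = 1`, `w = 0`), and that `P (T c) = 0` whenever `0 ≤ T` and `P T = 0`
(`u = √T`, `v = √T c`). For `x` in the range, `T = P (x* x) - x* x` is such an operator, so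
`P (P (x* x) c) = P (x* x c)`; polarization turns this into `P (P (x y) c) = P (x y c)` for `x, y`
in the range, which is the associativity of `x ⊙ y = P (x y)`. The C*-identity follows from
`x* x ≤ P (x* x)` and contractivity.
-/

namespace MatPos

open RCLike

theorem apply_swap_eq_star {A : Type*} [NonUnitalRing A] [StarRing A] {n : ℕ}
    {m : Matrix (Fin n) (Fin n) A} (h : MatPos m) (i j : Fin n) : m j i = star (m i j) := by
  obtain ⟨z, rfl⟩ := h
  simp [Matrix.mul_apply, star_sum]

variable {𝕜 E : Type*} [RCLike 𝕜] [NormedAddCommGroup E] [InnerProductSpace 𝕜 E] [CompleteSpace E]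

theorem re_sum_inner_nonneg {n : ℕ} {m : Matrix (Fin n) (Fin n) (E →L[𝕜] E)}
    (h : MatPos m) (ξ : Fin n → E) : 0 ≤ re (∑ i, ∑ j, inner 𝕜 (ξ i) (m i j (ξ j))) := by
  obtain ⟨z, rfl⟩ := h
  have hsum : ∑ i, ∑ j, inner 𝕜 (ξ i) ((z.conjTranspose * z) i j (ξ j))
      = ∑ k, inner 𝕜 (∑ i, z k i (ξ i)) (∑ j, z k j (ξ j)) :=
    calc _ = ∑ i, ∑ j, ∑ k, inner 𝕜 (z k i (ξ i)) (z k j (ξ j)) := by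
          simp only [Matrix.mul_apply, Matrix.conjTranspose_apply,
            sum_apply, mul_apply_eq_comp,
            ContinuousLinearMap.star_eq_adjoint, ContinuousLinearMap.adjoint_inner_right,
            inner_sum]
      _ = ∑ k, ∑ i, ∑ j, inner 𝕜 (z k i (ξ i)) (z k j (ξ j)) :=
          (Finset.sum_congr rfl fun _ _ => Finset.sum_comm).trans Finset.sum_comm
      _ = _ := Finset.sum_congr rfl fun _ _ => by rw [sum_inner]; simp only [inner_sum]
  rw [hsum, map_sum]
  exact Finset.sum_nonneg fun _ _ => inner_self_nonneg

theorem re_inner_fin_two_nonneg {a b c d : E →L[𝕜] E} (h : MatPos !![a, b; c, d])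
    (ξ η : E) :
    0 ≤ re (inner 𝕜 ξ (a ξ) + inner 𝕜 ξ (b η) + inner 𝕜 η (c ξ) + inner 𝕜 η (d η)) := by
  have := h.re_sum_inner_nonneg ![ξ, η]
  simpa [Fin.sum_univ_two, add_assoc] using this

theorem two_mul_norm_sq_le {a b c d : E →L[𝕜] E} (h : MatPos !![a, b; c, d]) (η : E)
    (t : ℝ) : 2 * t * ‖b η‖ ^ 2 ≤ t ^ 2 * re (inner 𝕜 (b η) (a (b η))) + re (inner 𝕜 η (d η)) := by
  have hc : c = star b := by simpa using h.apply_swap_eq_star 0 1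
  subst hc
  have := h.re_inner_fin_two_nonneg (-((t : 𝕜) • b η)) η
  simp only [map_neg, map_smul, inner_neg_right, inner_smul_right, inner_neg_left,
    inner_smul_left, conj_ofReal, mul_neg, neg_neg, inner_self_eq_norm_sq_to_K,
    ContinuousLinearMap.star_eq_adjoint, ContinuousLinearMap.adjoint_inner_right, map_add, mul_re,
    ofReal_re, ofReal_im, zero_mul, sub_zero, mul_im, add_zero, re_ofReal_pow, im_ofReal_pow,
    mul_zero] at this
  linear_combination this

theorem norm_sq_le_of_one_corner {b c d : E →L[𝕜] E} (h : MatPos !![1, b; c, d]) (η : E) :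
    ‖b η‖ ^ 2 ≤ re (inner 𝕜 η (d η)) := by
  have := h.two_mul_norm_sq_le η 1
  rw [one_apply_eq_self, inner_self_eq_norm_sq] at this
  linarith

theorem eq_zero_of_zero_corner {b c d : E →L[𝕜] E} (h : MatPos !![0, b; c, d]) : b = 0 := by
  ext η
  set D := re (inner 𝕜 η (d η))
  have hle : ∀ t : ℝ, 2 * t * ‖b η‖ ^ 2 ≤ D := fun t => by
    simpa using h.two_mul_norm_sq_le η t
  by_contra hne
  have hpos : 0 < ‖b η‖ := norm_pos_iff.mpr hne
  have hD : 2 * ((D + 1) / (2 * ‖b η‖ ^ 2)) * ‖b η‖ ^ 2 = D + 1 := by field_simp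
  linarith [hle ((D + 1) / (2 * ‖b η‖ ^ 2))]

end MatPos

theorem LinearMap.eq_zero_of_apply_star_self_eq_zero {V M : Type*} [AddCommGroup V] [Module ℂ V]
    [StarAddMonoid V] [StarModule ℂ V] [AddCommGroup M] [Module ℂ M] {B : V →ₗ[ℂ] V →ₗ[ℂ] M}
    (h : ∀ x, B (star x) x = 0) : B = 0 := by
  have hsum : ∀ x y, B (star x) y + B (star y) x = 0 := fun x y => by
    simpa [star_add, h] using h (x + y)
  have hdiff : ∀ x y, Complex.I • (B (star x) y - B (star y) x) = 0 := fun x y => by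
    have := h (x + Complex.I • y)
    simp only [star_add, star_smul, RCLike.star_def, Complex.conj_I, neg_smul, map_add, map_neg,
      map_smul, add_apply, neg_apply, smul_apply, h, smul_zero, zero_add] at this
    rw [← this]
    module
  ext x y
  have h2 : (2 : ℂ) • B x y = 0 := by
    have hd := (smul_eq_zero.mp (hdiff (star x) y)).resolve_left Complex.I_ne_zero
    rw [two_smul]
    simpa using congrArg₂ (· + ·) (hsum (star x) y) hd
  simpa using h2

namespace IsCP

section
variable {B : Type*} [NonUnitalRing B] [StarRing B] [Module ℂ B]

theorem matPos_map_fin_two {A : Type*} [NonUnitalRing A] [StarRing A] [Module ℂ A]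
    {P : A →ₗ[ℂ] B} (hP : IsCP P) (u v w : A) :
    MatPos !![P (star u * u), P (star u * v); P (star v * u), P (star v * v + star w * w)] := by
  convert hP 2 _ ⟨!![u, v; 0, w], rfl⟩ using 1
  ext i j
  fin_cases i <;> fin_cases j <;> simp [Matrix.mul_apply, Fin.sum_univ_two]

theorem map_star {A : Type*} [Ring A] [StarRing A] [Module ℂ A] {P : A →ₗ[ℂ] B} (hP : IsCP P)
    (x : A) : P (star x) = star (P x) := by
  simpa using (hP.matPos_map_fin_two 1 x 0).apply_swap_eq_star 0 1

end

variable {H : Type*} [NormedAddCommGroup H] [InnerProductSpace ℂ H] [CompleteSpace H]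
  {P : (H →L[ℂ] H) →ₗ[ℂ] (H →L[ℂ] H)}

theorem norm_map_le (hP : IsCP P) (hP1 : P 1 = 1) (a : H →L[ℂ] H) : ‖P a‖ ≤ ‖a‖ := by
  set r := ‖a‖ ^ 2
  obtain ⟨s, hs⟩ := CStarAlgebra.nonneg_iff_eq_star_mul_self.mp
    (sub_nonneg.mpr (CStarAlgebra.star_mul_le_algebraMap_norm_sq (a := a)))
  have hr : P (algebraMap ℝ _ r) = algebraMap ℝ _ r := by
    rw [Algebra.algebraMap_eq_smul_one, P.map_smul_of_tower, hP1]
  have hM := hP.matPos_map_fin_two 1 a s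
  rw [← hs, add_sub_cancel, hr] at hM
  simp only [star_one, one_mul, mul_one, hP1] at hM
  refine ContinuousLinearMap.opNorm_le_bound _ (norm_nonneg a) fun η => ?_
  have hη := hM.norm_sq_le_of_one_corner η
  rw [Algebra.algebraMap_eq_smul_one, smul_apply, one_apply_eq_self,
    inner_smul_right_eq_smul, RCLike.smul_re, inner_self_eq_norm_sq, ← mul_pow] at hη
  exact pow_le_pow_iff_left₀ (norm_nonneg _) (by positivity) two_ne_zero |>.mp hη

theorem star_map_mul_map_le (hP : IsCP P) (hP1 : P 1 = 1) (x : H →L[ℂ] H) :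
    star (P x) * P x ≤ P (star x * x) := by
  rw [ContinuousLinearMap.le_def, ContinuousLinearMap.isPositive_def']
  constructor
  · simp only [IsSelfAdjoint, star_sub, star_mul, star_star, ← hP.map_star]
  · intro η
    have hM := hP.matPos_map_fin_two 1 x 0
    simp only [star_one, one_mul, mul_one, star_zero, zero_mul, add_zero, hP1] at hM
    have hη := hM.norm_sq_le_of_one_corner η
    rw [ContinuousLinearMap.reApplyInnerSelf_apply, sub_apply, inner_sub_left,
      map_sub, mul_apply_eq_comp, ContinuousLinearMap.star_eq_adjoint (P x),
      ContinuousLinearMap.adjoint_inner_left, inner_self_eq_norm_sq, inner_re_symm]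
    linarith

theorem map_mul_eq_zero_of_nonneg (hP : IsCP P) {T : H →L[ℂ] H} (hT : 0 ≤ T) (hPT : P T = 0)
    (c : H →L[ℂ] H) : P (T * c) = 0 := by
  obtain ⟨s, rfl⟩ := CStarAlgebra.nonneg_iff_eq_star_mul_self.mp hT
  have hM := hP.matPos_map_fin_two s (s * c) 0
  rw [hPT, ← mul_assoc] at hM
  exact hM.eq_zero_of_zero_corner

theorem map_map_mul_mul (hP : IsCP P) (hP1 : P 1 = 1) (hPidem : ∀ x, P (P x) = P x)
    {x y : H →L[ℂ] H} (hx : P x = x) (hy : P y = y) (c : H →L[ℂ] H) :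
    P (P (x * y) * c) = P (x * y * c) := by
  -- the defect `(x, y) ↦ P ((P (x * y) - x * y) * c)`, precomposed with `P` so that it vanishes
  -- at every `(star x, x)` and not only on the range
  set D := ((LinearMap.mul ℂ _).compr₂ (P ∘ₗ LinearMap.mulRight ℂ c ∘ₗ (P - LinearMap.id))).compl₁₂
    P P
  have hD : ∀ x y, D x y = P ((P (P x * P y) - P x * P y) * c) := fun _ _ => rfl
  have hdiag : ∀ x, D (star x) x = 0 := fun x => by
    rw [hD, hP.map_star]
    refine hP.map_mul_eq_zero_of_nonneg (sub_nonneg.mpr ?_) (by rw [map_sub, hPidem, sub_self]) c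
    simpa only [hPidem] using hP.star_map_mul_map_le hP1 (P x)
  have := LinearMap.congr_fun₂ (LinearMap.eq_zero_of_apply_star_self_eq_zero hdiag) x y
  rwa [hD, hx, hy, sub_mul, map_sub, LinearMap.zero_apply, LinearMap.zero_apply,
    sub_eq_zero] at this

theorem map_mul_map_mul (hP : IsCP P) (hP1 : P 1 = 1) (hPidem : ∀ x, P (P x) = P x)
    {x y : H →L[ℂ] H} (hx : P x = x) (hy : P y = y) (c : H →L[ℂ] H) :
    P (c * P (x * y)) = P (c * x * y) := by
  have hstar : ∀ {z}, P z = z → P (star z) = star z := fun hz => by rw [hP.map_star, hz]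
  apply star_injective
  simpa only [← hP.map_star, star_mul, mul_assoc] using
    hP.map_map_mul_mul hP1 hPidem (hstar hy) (hstar hx) (star c)

theorem norm_map_star_mul_self (hP : IsCP P) (hP1 : P 1 = 1) {x : H →L[ℂ] H} (hx : P x = x) :
    ‖P (star x * x)‖ = ‖x‖ ^ 2 := by
  rw [sq, ← CStarRing.norm_star_mul_self]
  refine le_antisymm (hP.norm_map_le hP1 _) (CStarAlgebra.norm_le_norm_of_nonneg_of_le ?_ ?_)
  · exact star_mul_self_nonneg x
  · simpa only [hx] using hP.star_map_mul_map_le hP1 x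

theorem isClosed_range (hP : IsCP P) (hP1 : P 1 = 1) (hPidem : ∀ x, P (P x) = P x) :
    IsClosed (LinearMap.range P : Set (H →L[ℂ] H)) :=
  ContinuousLinearMap.IsIdempotentElem.isClosed_range
    (p := P.mkContinuous 1 fun a => by simpa using hP.norm_map_le hP1 a)
    (ContinuousLinearMap.ext hPidem)

end IsCP

/-- **Choi–Effros.** Let `P : B(H) → B(H)` be a unital completely positive
idempotent.  Then the range `R = P(B(H))`, with product `x ⊙ y := P (x * y)`, the inherited
involution and norm, is a C*-algebra: `R` is a closed star-closed subspace on which `⊙` is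
associative, submultiplicative, satisfies `star (x ⊙ y) = star y ⊙ star x` and the
C*-identity `‖star x ⊙ x‖ = ‖x‖ ^ 2`. -/
theorem choiEffros_range_is_CStarAlgebra
    {H : Type*} [NormedAddCommGroup H] [InnerProductSpace ℂ H] [CompleteSpace H]
    (P : (H →L[ℂ] H) →ₗ[ℂ] (H →L[ℂ] H))
    (hP1 : P 1 = 1) (hPcp : IsCP P) (hPidem : ∀ x, P (P x) = P x) :
    IsClosed ((LinearMap.range P : Submodule ℂ (H →L[ℂ] H)) : Set (H →L[ℂ] H)) ∧
    (∀ x ∈ LinearMap.range P, star x ∈ LinearMap.range P) ∧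
    (∀ x ∈ LinearMap.range P, ∀ y ∈ LinearMap.range P, ∀ z ∈ LinearMap.range P,
      P (P (x * y) * z) = P (x * P (y * z))) ∧
    (∀ x ∈ LinearMap.range P, ∀ y ∈ LinearMap.range P,
      star (P (x * y)) = P (star y * star x)) ∧
    (∀ x ∈ LinearMap.range P, ∀ y ∈ LinearMap.range P, ‖P (x * y)‖ ≤ ‖x‖ * ‖y‖) ∧
    (∀ x ∈ LinearMap.range P, ‖P (star x * x)‖ = ‖x‖ ^ 2) := by
  have hfix : ∀ x ∈ LinearMap.range P, P x = x := by
    rintro _ ⟨y, rfl⟩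
    exact hPidem y
  refine ⟨hPcp.isClosed_range hP1 hPidem, fun x hx => ⟨star x, by rw [hPcp.map_star, hfix x hx]⟩,
    fun x hx y hy z hz => ?_, fun x _ y _ => ?_, fun x _ y _ => ?_,
    fun x hx => hPcp.norm_map_star_mul_self hP1 (hfix x hx)⟩
  · rw [hPcp.map_map_mul_mul hP1 hPidem (hfix x hx) (hfix y hy),
      hPcp.map_mul_map_mul hP1 hPidem (hfix y hy) (hfix z hz), mul_assoc]
  · rw [← hPcp.map_star, star_mul]
  · exact (hPcp.norm_map_le hP1 _).trans (norm_mul_le x y)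
end

section
/- Let A ⊆ B be unital C*-algebras such that the inclusion is rigid (every ucp endomorphism of B fixing A pointwise is the identity) and B is injective as an operator system. If Θ : B → C and Σ : C → B are ucp maps into/from another unital C*-algebra C containing a copy of A, with Θ|_A = id_A, Σ|_A = id_A, and the inclusion A ⊆ C also rigid, then Σ ∘ Θ = id_B and Θ ∘ Σ = id_C; hence Θ is a complete order isomorphism, and therefore a *-isomorphism B ≅ C. -/
/-- The C*-norm of a matrix over a unital C*-algebra, characterised order-theoretically:
`‖m‖ = inf {t ≥ 0 | t² • 1 - mᴴ * m ≥ 0}`. -/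
noncomputable def matNorm {A : Type*} [Ring A] [StarRing A] [Module ℝ A] {n : ℕ}
    (m : Matrix (Fin n) (Fin n) A) : ℝ :=
  sInf {t : ℝ | 0 ≤ t ∧
    MatPos (t ^ 2 • (1 : Matrix (Fin n) (Fin n) A) - m.conjTranspose * m)}

/-- An operator system: a unital, star-closed subspace of a unital C*-algebra. -/
def IsOpSystem {W : Type*} [CStarAlgebra W] (S : Submodule ℂ W) : Prop :=
  (1 : W) ∈ S ∧ ∀ x ∈ S, star x ∈ S


/-!
Rigidity turns `Sig ∘ Θ` and `Θ ∘ Sig`, which are ucp and fix `A`, into identities, so `Θ` is a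
unital complete order isomorphism. The Kadison–Schwarz inequality applied to `Θ` and to its
inverse then forces equality `Θ (x⋆ x) = (Θ x)⋆ Θ x`, and polarization upgrades this to
multiplicativity.
-/

namespace MatPos

variable {R : Type*} [NonUnitalRing R] [StarRing R] {n : ℕ} {m : Matrix (Fin n) (Fin n) R}

lemma isHermitian (hm : MatPos m) : m.IsHermitian := by
  obtain ⟨z, rfl⟩ := hm
  exact Matrix.isHermitian_conjTranspose_mul_self z

lemma conjTranspose_mul_mul (hm : MatPos m) (v : Matrix (Fin n) (Fin n) R) :
    MatPos (v.conjTranspose * m * v) := by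
  obtain ⟨z, rfl⟩ := hm
  exact ⟨z * v, by simp only [Matrix.conjTranspose_mul, Matrix.mul_assoc]⟩

lemma diag_nonneg [PartialOrder R] [StarOrderedRing R] (hm : MatPos m) (i : Fin n) :
    0 ≤ m i i := by
  obtain ⟨z, rfl⟩ := hm
  simp only [Matrix.mul_apply, Matrix.conjTranspose_apply]
  exact Finset.sum_nonneg fun k _ => star_mul_self_nonneg (z k i)

lemma star_mul_self (z : R) : MatPos !![star z * z] :=
  ⟨!![z], by ext i j; fin_cases i; fin_cases j; simp [Matrix.mul_apply]⟩

lemma schwarzBlock {R : Type*} [Ring R] [StarRing R] (x : R) :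
    MatPos !![1, x; star x, star x * x] :=
  ⟨!![1, x; 0, 0], by
    ext i j
    fin_cases i <;> fin_cases j <;>
      simp [Matrix.mul_apply, Fin.sum_univ_two, Matrix.conjTranspose_apply]⟩

end MatPos

namespace IsCP

variable {A B C : Type*} [Ring A] [StarRing A] [Module ℂ A]
  [Ring B] [StarRing B] [Module ℂ B] [Ring C] [StarRing C] [Module ℂ C]

lemma comp {φ : A →ₗ[ℂ] B} {ψ : B →ₗ[ℂ] C} (hφ : IsCP φ) (hψ : IsCP ψ) : IsCP (ψ ∘ₗ φ) := by
  intro n m hm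
  simpa only [LinearMap.coe_comp, Matrix.map_map] using hψ n _ (hφ n m hm)

lemma map_star_s14 {φ : A →ₗ[ℂ] B} (hφ : IsCP φ) (x : A) : φ (star x) = star (φ x) := by
  simpa using ((hφ 2 _ (MatPos.schwarzBlock x)).isHermitian.apply 1 0).symm

lemma map_nonneg [PartialOrder A] [StarOrderedRing A] [PartialOrder B] [StarOrderedRing B]
    {φ : A →ₗ[ℂ] B} (hφ : IsCP φ) {p : A} (hp : 0 ≤ p) : 0 ≤ φ p := by
  rw [StarOrderedRing.nonneg_iff] at hp
  induction hp using AddSubmonoid.closure_induction with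
  | mem _ hz =>
    obtain ⟨z, rfl⟩ := hz
    simpa using (hφ 1 _ (MatPos.star_mul_self z)).diag_nonneg 0
  | zero => simp
  | add _ _ _ _ hp hq => simpa using add_nonneg hp hq

/-- Kadison–Schwarz inequality. -/
lemma star_map_mul_map_le_s14 [PartialOrder B] [StarOrderedRing B]
    {φ : A →ₗ[ℂ] B} (hφ : IsCP φ) (hφ1 : φ 1 = 1) (x : A) :
    star (φ x) * φ x ≤ φ (star x * x) := by
  have hW : !![(1 : A), x; star x, star x * x].map φ =
      !![1, φ x; star (φ x), φ (star x * x)] := by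
    ext i j; fin_cases i <;> fin_cases j <;> simp [hφ1, hφ.map_star_s14]
  -- compress the positive block matrix against the column `(-φ x, 1)`
  have hpos := ((hφ 2 _ (MatPos.schwarzBlock x)).conjTranspose_mul_mul
    !![-φ x, 0; 1, 0]).diag_nonneg 0
  rw [← sub_nonneg]
  convert hpos using 1
  rw [hW]
  simp only [Fin.isValue, Matrix.mul_apply, Matrix.conjTranspose_apply, Matrix.of_apply,
    Matrix.cons_val', Matrix.cons_val_zero, Matrix.cons_val_fin_one, Matrix.cons_val_one,
    Fin.sum_univ_two, star_neg, star_one, neg_mul, mul_neg, one_mul, mul_one, zero_mul,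
    neg_add_cancel, neg_zero, zero_add]
  noncomm_ring

end IsCP

/-- Polarization: the defect `φ (x⋆ y) - (φ x)⋆ φ y` is sesquilinear, so it vanishes once it
vanishes on the diagonal. -/
lemma map_star_mul_of_map_star_mul_self {A B : Type*} [Ring A] [StarRing A] [Algebra ℂ A]
    [StarModule ℂ A] [Ring B] [StarRing B] [Algebra ℂ B] [StarModule ℂ B] {φ : A →ₗ[ℂ] B}
    (hsq : ∀ x, φ (star x * x) = star (φ x) * φ x) (x y : A) :
    φ (star x * y) = star (φ x) * φ y := by
  set D : A → A → B := fun x y => φ (star x * y) - star (φ x) * φ y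
  have hsum : ∀ x y, D x y + D y x = 0 := by
    intro x y
    have h := hsq (x + y)
    simp only [star_add, add_mul, mul_add, map_add, hsq] at h
    rw [← sub_eq_zero] at h
    rw [← h]
    simp only [D]
    abel
  have hI_left : D (Complex.I • x) y = -(Complex.I • D x y) := by
    simp only [D, star_smul, Complex.star_def, Complex.conj_I, neg_smul, neg_mul, smul_mul_assoc,
      map_neg, map_smul, smul_sub]
    abel
  have hI_right : D y (Complex.I • x) = Complex.I • D y x := by
    simp only [D, mul_smul_comm, map_smul, smul_sub]
  have hsymm : D y x = D x y := by
    have h := hsum (Complex.I • x) y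
    rw [hI_left, hI_right, neg_add_eq_sub, sub_eq_zero] at h
    exact smul_right_injective B Complex.I_ne_zero h
  have h2 : (2 : ℂ) • D x y = 0 := by rw [two_smul]; nth_rw 2 [← hsymm]; exact hsum x y
  exact sub_eq_zero.mp ((smul_eq_zero.mp h2).resolve_left two_ne_zero)

/-- Kadison–Schwarz for `φ` and for its inverse `ψ` squeeze `ψ ((φ x)⋆ φ x)` onto `x⋆ x`. -/
lemma map_star_mul_self_of_ucp_inverse {A B : Type*} [Ring A] [StarRing A] [Module ℂ A]
    [PartialOrder A] [StarOrderedRing A] [Ring B] [StarRing B] [Module ℂ B]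
    [PartialOrder B] [StarOrderedRing B] {φ : A →ₗ[ℂ] B} {ψ : B →ₗ[ℂ] A}
    (hφ : IsCP φ) (hφ1 : φ 1 = 1) (hψ : IsCP ψ) (hψ1 : ψ 1 = 1)
    (hψφ : ∀ x, ψ (φ x) = x) (hφψ : ∀ y, φ (ψ y) = y) (x : A) :
    φ (star x * x) = star (φ x) * φ x := by
  have hle : ψ (star (φ x) * φ x) ≤ star x * x := by
    simpa [hψφ] using hψ.map_nonneg (sub_nonneg.mpr (hφ.star_map_mul_map_le_s14 hφ1 x))
  have hge : star x * x ≤ ψ (star (φ x) * φ x) := by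
    simpa [hψφ] using hψ.star_map_mul_map_le_s14 hψ1 (φ x)
  rw [← hφψ (star (φ x) * φ x), le_antisymm hle hge]

theorem ucp_inverse_pair_is_star_iso_general
    {B C : Type*} [CStarAlgebra B] [CStarAlgebra C]
    (A : StarSubalgebra ℂ B) (j : A →⋆ₐ[ℂ] C)
    -- rigidity of A ⊆ B
    (hrigidB : ∀ Φ : B →ₗ[ℂ] B, Φ 1 = 1 → IsCP Φ → (∀ a ∈ A, Φ a = a) → ∀ x, Φ x = x)
    -- rigidity of A ⊆ C (via the copy j(A))
    (hrigidC : ∀ Ψ : C →ₗ[ℂ] C, Ψ 1 = 1 → IsCP Ψ →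
      (∀ a : A, Ψ (j a) = j a) → ∀ y, Ψ y = y)
    (Θ : B →ₗ[ℂ] C) (hΘ1 : Θ 1 = 1) (hΘcp : IsCP Θ)
    (hΘA : ∀ a : A, Θ a = j a)
    (Sig : C →ₗ[ℂ] B) (hSig1 : Sig 1 = 1) (hSigcp : IsCP Sig)
    (hSigA : ∀ a : A, Sig (j a) = a) :
    (∀ x, Sig (Θ x) = x) ∧ (∀ y, Θ (Sig y) = y) ∧
    (∀ x y : B, Θ (x * y) = Θ x * Θ y) ∧ (∀ x : B, Θ (star x) = star (Θ x)) := by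
  let _ := CStarAlgebra.spectralOrder B
  have _ := CStarAlgebra.spectralOrderedRing B
  let _ := CStarAlgebra.spectralOrder C
  have _ := CStarAlgebra.spectralOrderedRing C
  have hSigΘ : ∀ x, Sig (Θ x) = x :=
    hrigidB (Sig ∘ₗ Θ) (by simp [hΘ1, hSig1]) (hΘcp.comp hSigcp)
      fun a ha => by simp [hΘA ⟨a, ha⟩, hSigA ⟨a, ha⟩]
  have hΘSig : ∀ y, Θ (Sig y) = y :=
    hrigidC (Θ ∘ₗ Sig) (by simp [hΘ1, hSig1]) (hSigcp.comp hΘcp)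
      fun a => by simp [hΘA, hSigA]
  have hmul : ∀ x y, Θ (star x * y) = star (Θ x) * Θ y :=
    map_star_mul_of_map_star_mul_self
      (map_star_mul_self_of_ucp_inverse hΘcp hΘ1 hSigcp hSig1 hSigΘ hΘSig)
  refine ⟨hSigΘ, hΘSig, fun x y => ?_, hΘcp.map_star_s14⟩
  simpa [hΘcp.map_star_s14] using hmul (star x) y

/-- Let `A ⊆ B` be a rigid unital inclusion of C*-algebras with `B`
injective as an operator system, and let `C` be another unital C*-algebra containing a copy
`j(A)` of `A` rigidly.  If `Θ : B → C` and `Sig : C → B` are ucp maps restricting to the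
identity of `A`, then `Sig ∘ Θ = id_B` and `Θ ∘ Sig = id_C`; hence `Θ` is a complete order
isomorphism and therefore a ∗-isomorphism `B ≅ C`. -/
theorem ucp_inverse_pair_is_star_iso
    {B C : Type*} [CStarAlgebra B] [CStarAlgebra C]
    (A : StarSubalgebra ℂ B) (j : A →⋆ₐ[ℂ] C) (hjinj : Function.Injective j)
    -- rigidity of A ⊆ B
    (hrigidB : ∀ Φ : B →ₗ[ℂ] B, Φ 1 = 1 → IsCP Φ → (∀ a ∈ A, Φ a = a) → ∀ x, Φ x = x)
    -- B is injective as an operator system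
    (hinj : ∀ (W : Type) [CStarAlgebra W] (S T : Submodule ℂ W),
      IsOpSystem S → IsOpSystem T → ∀ (hST : S ≤ T),
      ∀ u : S →ₗ[ℂ] B, (∀ x : S, (x : W) = 1 → u x = 1) →
        (∀ (n : ℕ) (m : Matrix (Fin n) (Fin n) S),
          MatPos (m.map (fun s => (s : W))) → MatPos (m.map (fun s => u s))) →
        ∃ v : T →ₗ[ℂ] B, (∀ x : T, (x : W) = 1 → v x = 1) ∧
          (∀ (n : ℕ) (m : Matrix (Fin n) (Fin n) T),
            MatPos (m.map (fun s => (s : W))) → MatPos (m.map (fun s => v s))) ∧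
          (∀ (s : W) (hs : s ∈ S), v ⟨s, hST hs⟩ = u ⟨s, hs⟩))
    -- rigidity of A ⊆ C (via the copy j(A))
    (hrigidC : ∀ Ψ : C →ₗ[ℂ] C, Ψ 1 = 1 → IsCP Ψ →
      (∀ a : A, Ψ (j a) = j a) → ∀ y, Ψ y = y)
    (Θ : B →ₗ[ℂ] C) (hΘ1 : Θ 1 = 1) (hΘcp : IsCP Θ)
    (hΘA : ∀ a : A, Θ a = j a)
    (Sig : C →ₗ[ℂ] B) (hSig1 : Sig 1 = 1) (hSigcp : IsCP Sig)
    (hSigA : ∀ a : A, Sig (j a) = a) :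
    (∀ x, Sig (Θ x) = x) ∧ (∀ y, Θ (Sig y) = y) ∧
    (∀ x y : B, Θ (x * y) = Θ x * Θ y) ∧ (∀ x : B, Θ (star x) = star (Θ x)) :=
  ucp_inverse_pair_is_star_iso_general A j hrigidB hrigidC Θ hΘ1 hΘcp hΘA Sig hSig1 hSigcp hSigA
end

section
/- Let K be a compact Hausdorff space and U ⊆ K a dense open subset. Then the Stone–Čech compactification βU of U is homeomorphic to K if and only if every bounded continuous function on U extends continuously to K; in particular, if K is extremally disconnected, then βU ≅ K and hence C(βU) ≅ C(K). -/
/-!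
The extension `φ : βU → K` of the inclusion is onto, its image being compact and containing the
dense set `U`. If bounded functions on `U` extend to `K`, then pulling back along `φ` yields every
continuous function on `βU`; these separate points (Urysohn), so `φ` is injective and hence a
homeomorphism. Conversely, through a homeomorphism `φ` the extension of `f` to `βU` becomes an
extension to `K`.

For extremally disconnected `K`, the closure of the graph of `f` in `K × ℂ` is compact and projects
onto `K`; by Gleason's theorem `K` is projective, so the projection has a continuous section. Its
second coordinate extends `f`, because the graph of `f` is already closed in `U × ℂ`.
-/

open Function Set Topology BoundedContinuousFunction

universe u v

theorem DenseRange.surjective_of_continuous {X Y : Type*} [TopologicalSpace X] [TopologicalSpace Y]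
    [CompactSpace X] [T2Space Y] {f : X → Y} (hd : DenseRange f) (hf : Continuous f) :
    Surjective f :=
  range_eq_univ.mp <| (isCompact_range hf).isClosed.closure_eq ▸ hd.closure_range

section StoneCech

variable {X Y : Type*} [TopologicalSpace X] [TopologicalSpace Y] [CompactSpace Y] [T2Space Y]
  {i : X → Y} (hi : Continuous i)

theorem surjective_stoneCechExtend (hd : DenseRange i) : Surjective (stoneCechExtend hi) :=
  DenseRange.surjective_of_continuous
    (hd.mono <| range_subset_iff.mpr fun x => ⟨_, stoneCechExtend_stoneCechUnit hi x⟩)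
    (continuous_stoneCechExtend hi)

theorem BoundedContinuousFunction.exists_stoneCech_extension {E : Type*} [MetricSpace E]
    [ProperSpace E] (f : X →ᵇ E) : ∃ g : C(StoneCech X, E), ∀ x, g (stoneCechUnit x) = f x := by
  have : CompactSpace (closure (range f)) :=
    isCompact_iff_compactSpace.mp f.isBounded_range.isCompact_closure
  have hf : Continuous fun x => (⟨f x, subset_closure (mem_range_self x)⟩ : closure (range f)) :=
    f.continuous.subtype_mk _
  exact ⟨⟨_, continuous_subtype_val.comp (continuous_stoneCechExtend hf)⟩,
    fun x => congrArg Subtype.val (stoneCechExtend_stoneCechUnit hf x)⟩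

theorem exists_extension_of_isHomeomorph_stoneCechExtend {E : Type*} [MetricSpace E]
    [ProperSpace E] (hh : IsHomeomorph (stoneCechExtend hi)) (f : X →ᵇ E) :
    ∃ g : C(Y, E), ∀ x, g (i x) = f x := by
  obtain ⟨G, hG⟩ := f.exists_stoneCech_extension
  refine ⟨G.comp (hh.homeomorph _).symm, fun x => ?_⟩
  have : (hh.homeomorph _).symm (i x) = stoneCechUnit x :=
    (hh.homeomorph _).symm_apply_eq.mpr (stoneCechExtend_stoneCechUnit hi x).symm
  simp [this, hG]

theorem injective_stoneCechExtend_of_forall_exists_extension {𝕜 : Type*} [RCLike 𝕜]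
    (hext : ∀ f : X →ᵇ 𝕜, ∃ g : C(Y, 𝕜), ∀ x, g (i x) = f x) :
    Injective (stoneCechExtend hi) := by
  intro a b hab
  by_contra hne
  obtain ⟨h, ha, hb, -⟩ := exists_continuous_zero_one_of_isClosed isClosed_singleton
    isClosed_singleton (disjoint_singleton.mpr hne)
  let F : C(StoneCech X, 𝕜) := ⟨fun p => (h p : 𝕜), RCLike.continuous_ofReal.comp h.continuous⟩
  obtain ⟨g, hg⟩ := hext <| (BoundedContinuousFunction.mkOfCompact F).compContinuous
    ⟨stoneCechUnit, continuous_stoneCechUnit⟩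
  have hgF : g ∘ stoneCechExtend hi = F :=
    stoneCech_hom_ext (g.continuous.comp (continuous_stoneCechExtend hi)) F.continuous <| by
      ext x; simpa using hg x
  have : F a = F b := by rw [← hgF, comp_apply, comp_apply, hab]
  simp [F, ha rfl, hb rfl] at this

theorem isHomeomorph_stoneCechExtend_iff {𝕜 : Type*} [RCLike 𝕜] (hd : DenseRange i) :
    IsHomeomorph (stoneCechExtend hi) ↔ ∀ f : X →ᵇ 𝕜, ∃ g : C(Y, 𝕜), ∀ x, g (i x) = f x :=
  ⟨exists_extension_of_isHomeomorph_stoneCechExtend hi, fun hext =>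
    isHomeomorph_iff_continuous_bijective.mpr ⟨continuous_stoneCechExtend hi,
      injective_stoneCechExtend_of_forall_exists_extension hi hext,
      surjective_stoneCechExtend hi hd⟩⟩

end StoneCech

theorem snd_eq_of_mem_closure_graph {K E : Type*} [TopologicalSpace K] [TopologicalSpace E]
    [T2Space E] {U : Set K} {f : U → E} (hf : Continuous f) {p : K × E}
    (hp : p ∈ closure (range fun x : U => ((x : K), f x))) (hpU : p.1 ∈ U) :
    p.2 = f ⟨p.1, hpU⟩ := by
  have hG : IsClosed {q : U × E | q.2 = f q.1} :=
    isClosed_eq continuous_snd (hf.comp continuous_fst)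
  have hemb : IsEmbedding (Prod.map ((↑) : U → K) (id : E → E)) :=
    IsEmbedding.subtypeVal.prodMap .id
  have : ((⟨p.1, hpU⟩ : U), p.2) ∈ closure {q : U × E | q.2 = f q.1} := by
    rw [hemb.closure_eq_preimage_closure_image]
    refine closure_mono ?_ hp
    rintro _ ⟨x, rfl⟩
    exact ⟨(x, f x), rfl, rfl⟩
  exact hG.closure_subset this

/- `K` lives in a universe at least that of `E` because Gleason's projectivity only lifts through
compact spaces in the universe of `K`, and we lift through a subspace of `K × E`. -/
theorem ExtremallyDisconnected.exists_extension_of_dense {K : Type max u v} {E : Type v}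
    [TopologicalSpace K] [CompactSpace K] [T2Space K] [ExtremallyDisconnected K]
    [MetricSpace E] [ProperSpace E]
    {U : Set K} (hU : Dense U) (f : U →ᵇ E) : ∃ g : C(K, E), ∀ x : U, g x = f x := by
  set S := range fun x : U => ((x : K), f x)
  have : CompactSpace (closure S) := isCompact_iff_compactSpace.mp <|
    (isCompact_univ.prod f.isBounded_range.isCompact_closure).closure_of_subset <| by
      rintro _ ⟨x, rfl⟩
      exact ⟨mem_univ _, subset_closure (mem_range_self x)⟩
  let π : closure S → K := fun p => p.1.1
  have hπ : Continuous π := continuous_fst.comp continuous_subtype_val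
  have hπS : Surjective π := DenseRange.surjective_of_continuous
    (hU.mono fun y hy => ⟨⟨_, subset_closure ⟨⟨y, hy⟩, rfl⟩⟩, rfl⟩) hπ
  obtain ⟨s, hs, hπs⟩ := CompactT2.ExtremallyDisconnected.projective continuous_id hπ hπS
  refine ⟨⟨fun y => (s y).1.2, continuous_snd.comp (continuous_subtype_val.comp hs)⟩, fun x => ?_⟩
  have hsx : (s x).1.1 = x := congrFun hπs x
  exact (snd_eq_of_mem_closure_graph f.continuous (s x).2 (by rw [hsx]; exact x.2)).trans
    (congrArg f (Subtype.ext hsx))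

theorem stoneCech_of_dense_open_eq_iff_extension_general
    {K : Type*} [TopologicalSpace K] [CompactSpace K] [T2Space K]
    (U : Set K) (hUdense : Dense U) :
    (IsHomeomorph (stoneCechExtend (continuous_subtype_val : Continuous ((↑) : U → K))) ↔
      ∀ f : BoundedContinuousFunction U ℂ, ∃ g : C(K, ℂ), ∀ x : U, g x = f x) ∧
    (ExtremallyDisconnected K →
      IsHomeomorph (stoneCechExtend (continuous_subtype_val : Continuous ((↑) : U → K))) ∧
      Nonempty (C(StoneCech U, ℂ) ≃⋆ₐ[ℂ] C(K, ℂ))) := by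
  have hiff := isHomeomorph_stoneCechExtend_iff (𝕜 := ℂ) continuous_subtype_val
    hUdense.denseRange_val
  refine ⟨hiff, fun hK => ?_⟩
  have hh := hiff.mpr (hK.exists_extension_of_dense hUdense)
  exact ⟨hh, ⟨(hh.homeomorph _).symm.compStarAlgEquiv' ℂ ℂ⟩⟩

/-- Let `K` be compact Hausdorff and `U ⊆ K` dense open.  The canonical map
`βU → K` (the Stone–Čech extension of the inclusion `U ↪ K`) is a homeomorphism iff every
bounded continuous function on `U` extends continuously to `K`; in particular, if `K` is
extremally disconnected then `βU ≅ K`, and hence `C(βU) ≅ C(K)`. -/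
theorem stoneCech_of_dense_open_eq_iff_extension
    {K : Type*} [TopologicalSpace K] [CompactSpace K] [T2Space K]
    (U : Set K) (hUopen : IsOpen U) (hUdense : Dense U) :
    (IsHomeomorph (stoneCechExtend (continuous_subtype_val : Continuous ((↑) : U → K))) ↔
      ∀ f : BoundedContinuousFunction U ℂ, ∃ g : C(K, ℂ), ∀ x : U, g x = f x) ∧
    (ExtremallyDisconnected K →
      IsHomeomorph (stoneCechExtend (continuous_subtype_val : Continuous ((↑) : U → K))) ∧
      Nonempty (C(StoneCech U, ℂ) ≃⋆ₐ[ℂ] C(K, ℂ))) :=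
  stoneCech_of_dense_open_eq_iff_extension_general U hUdense
end
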